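/- arXiv:0807.3540 — 2 statements merged into one kernel-verified Lean document; each statement's English description precedes it below -/
import Mathlib

section
/- Let $\phi_w : [-1,1] \to \mathbb{R}$ be continuous with $|\phi_w| \le 1$ and satisfy $\phi_w(1-t) = A t^{\alpha} + o(t^{\alpha})$ as $t \downarrow 0$ for some $A \in \mathbb{R}$ and $\alpha \ge 0$. Let $\lambda > 1$, $\mu > 0$, $\lambda_0 \in \mathbb{R}$. Then as $h \downarrow 0$, $\int_{\epsilon}^{1} \phi_w(s)\, s^{-\lambda_0} \exp\big(s^{\lambda}/(\mu h^{\lambda})\big)\,ds \sim A\,\Gamma(\alpha+1)\,\Big(\frac{\mu}{\lambda}\,h^{\lambda}\Big)^{1+\alpha}\, e^{1/(\mu h^{\lambda})}$ for any fixed $0 < \epsilon < 1$. -/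
/-!
Put `c = 1 / (μ h^λ)` and `g(s) = φ_w(s) s^{-λ₀}`. The substitution `s = 1 - u / (λ c)` turns
`(λ c)^{1+α} e^{-c} ∫_ε^1 g(s) e^{c s^λ} ds` into an integral over `u ∈ (0, ∞)` whose integrand
tends to `A u^α e^{-u}`, because `c ((1 - u/(λc))^λ - 1) → -u`. Since `s^λ ≤ s` on `[0, 1]` and
`|g(1 - t)| ≤ K t^α` on `(0, 1 - ε]` (continuity away from `t = 0`, the asymptotics near it), the
integrands are dominated by `K u^α e^{-u/λ}`, and dominated convergence gives `A Γ(α + 1)`.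
-/

set_option autoImplicit false
open MeasureTheory Real Filter Topology Set

lemma exists_norm_le_of_continuousOn_Ioc_of_tendsto {E : Type*} [NormedAddCommGroup E]
    {f : ℝ → E} {a b : ℝ} {L : E} (hf : ContinuousOn f (Ioc a b))
    (hlim : Tendsto f (𝓝[>] a) (𝓝 L)) : ∃ C, ∀ x ∈ Ioc a b, ‖f x‖ ≤ C := by
  obtain ⟨d, hd, hnear⟩ := mem_nhdsGT_iff_exists_Ioo_subset.1
    (hlim.norm.eventually (gt_mem_nhds (lt_add_one ‖L‖)))
  obtain ⟨C, hC⟩ := isCompact_Icc.exists_bound_of_continuousOn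
    (hf.mono (Icc_subset_Ioc hd le_rfl))
  refine ⟨max (‖L‖ + 1) C, fun x hx => ?_⟩
  rcases lt_or_ge x d with hxd | hxd
  · exact le_max_of_le_left (hnear ⟨hx.1, hxd⟩).le
  · exact le_max_of_le_right (hC x ⟨hxd, hx.2⟩)

lemma integral_comp_one_sub_div {E : Type*} [NormedAddCommGroup E] [NormedSpace ℝ E]
    (f : ℝ → E) (ε : ℝ) {a : ℝ} (ha : a ≠ 0) :
    ∫ u in (0 : ℝ)..(1 - ε) * a, f (1 - u / a) = a • ∫ s in ε..1, f s := by
  rw [intervalIntegral.integral_comp_div (fun t => f (1 - t)) ha,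
    intervalIntegral.integral_comp_sub_left f 1, mul_div_cancel_right₀ _ ha]
  simp

lemma tendsto_mul_one_sub_div_rpow_sub_one (p x : ℝ) :
    Tendsto (fun c : ℝ => c * ((1 - x / c) ^ p - 1)) atTop (𝓝 (-(x * p))) := by
  have hderiv : HasDerivAt (fun y : ℝ => (1 - x * y) ^ p) (-(x * p)) 0 := by
    simpa using (((hasDerivAt_id (0 : ℝ)).const_mul x).const_sub 1).rpow_const
      (p := p) (by simp)
  refine (hderiv.tendsto_slope_zero.comp (tendsto_inv_atTop_nhdsGT_zero.mono_right
    (nhdsWithin_mono _ fun y hy => ne_of_gt hy))).congr' ?_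
  filter_upwards [eventually_ne_atTop 0] with c hc
  simp [div_eq_mul_inv]

section Laplace

variable {g : ℝ → ℝ} {ε α A lam : ℝ}

/-- `(lam * c) ^ (1 + α) * exp (-c) * ∫ s in ε..1, g s * exp (c * s ^ lam)` after the substitution
`s = 1 - u / (lam * c)`, as an integrand on `u ∈ (0, ∞)` vanishing beyond `u = (1 - ε) * lam * c`. -/
noncomputable def laplaceRescaled (g : ℝ → ℝ) (ε α lam c u : ℝ) : ℝ :=
  (Ioc 0 ((1 - ε) * (lam * c))).indicator
    (fun u => (lam * c) ^ α * g (1 - u / (lam * c)) * exp (c * ((1 - u / (lam * c)) ^ lam - 1))) u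

lemma mul_exp_integral_eq_integral_laplaceRescaled (hε1 : ε ≤ 1) (hlam : 0 < lam) {c : ℝ}
    (hc : 0 < c) :
    (lam * c) ^ (1 + α) * exp (-c) * ∫ s in ε..1, g s * exp (c * s ^ lam) =
      ∫ u in Ioi 0, laplaceRescaled g ε α lam c u := by
  have hlc : 0 < lam * c := mul_pos hlam hc
  have hT : 0 ≤ (1 - ε) * (lam * c) := mul_nonneg (by linarith) hlc.le
  have hshift : exp (-c) * ∫ s in ε..1, g s * exp (c * s ^ lam) =
      ∫ s in ε..1, g s * exp (c * (s ^ lam - 1)) := by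
    rw [← intervalIntegral.integral_const_mul]
    congr 1 with s
    rw [mul_sub_one, exp_sub, exp_neg]
    ring
  unfold laplaceRescaled
  rw [setIntegral_indicator measurableSet_Ioc, inter_eq_right.2 Ioc_subset_Ioi_self,
    ← intervalIntegral.integral_of_le hT]
  simp_rw [mul_assoc ((lam * c) ^ α)]
  rw [intervalIntegral.integral_const_mul,
    integral_comp_one_sub_div (fun s => g s * exp (c * (s ^ lam - 1))) ε hlc.ne', smul_eq_mul,
    ← hshift, rpow_add hlc, rpow_one]
  ring

lemma exists_abs_le_mul_rpow (hg : ContinuousOn g (Icc ε 1))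
    (hasymp : Tendsto (fun t => g (1 - t) / t ^ α) (𝓝[>] 0) (𝓝 A)) :
    ∃ K, 0 ≤ K ∧ ∀ t ∈ Ioc 0 (1 - ε), |g (1 - t)| ≤ K * t ^ α := by
  have hcont : ContinuousOn (fun t => g (1 - t) / t ^ α) (Ioc 0 (1 - ε)) :=
    (hg.comp (by fun_prop : ContinuousOn (fun t : ℝ => 1 - t) (Ioc 0 (1 - ε)))
        fun t ht => ⟨by linarith [ht.2], by linarith [ht.1]⟩).div
      (continuousOn_id.rpow_const fun t ht => Or.inl ht.1.ne')
      fun t ht => (rpow_pos_of_pos ht.1 α).ne'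
  obtain ⟨C, hC⟩ := exists_norm_le_of_continuousOn_Ioc_of_tendsto hcont hasymp
  refine ⟨max C 0, le_max_right _ _, fun t ht => ?_⟩
  have htα := rpow_pos_of_pos ht.1 α
  have hCt := hC t ht
  rw [norm_div, Real.norm_eq_abs, Real.norm_eq_abs, abs_of_pos htα, div_le_iff₀ htα] at hCt
  exact hCt.trans (mul_le_mul_of_nonneg_right (le_max_left _ _) htα.le)

lemma abs_laplaceRescaled_le {K : ℝ} (hK0 : 0 ≤ K)
    (hK : ∀ t ∈ Ioc 0 (1 - ε), |g (1 - t)| ≤ K * t ^ α) (hε0 : 0 ≤ ε) (hlam : 1 ≤ lam)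
    {c u : ℝ} (hc : 0 < c) (hu : 0 < u) :
    |laplaceRescaled g ε α lam c u| ≤ K * (u ^ α * exp (-(1 / lam) * u)) := by
  have hlc : 0 < lam * c := mul_pos (by linarith) hc
  unfold laplaceRescaled
  by_cases hmem : u ∈ Ioc 0 ((1 - ε) * (lam * c))
  swap
  · rw [indicator_of_notMem hmem, abs_zero]
    positivity
  rw [indicator_of_mem hmem]
  set t := u / (lam * c) with ht
  have ht0 : 0 < t := div_pos hu hlc
  have ht1 : t ≤ 1 - ε := (div_le_iff₀ hlc).2 hmem.2
  have hexp : c * ((1 - t) ^ lam - 1) ≤ -(1 / lam) * u := by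
    have hpow := rpow_le_self_of_le_one (x := 1 - t) (by linarith) (by linarith) hlam
    have hct : c * t = 1 / lam * u := by rw [ht]; field_simp
    nlinarith
  have hut : (lam * c) ^ α * t ^ α = u ^ α := by
    rw [← mul_rpow hlc.le ht0.le, ht, mul_div_cancel₀ _ hlc.ne']
  calc |(lam * c) ^ α * g (1 - t) * exp (c * ((1 - t) ^ lam - 1))|
      = (lam * c) ^ α * |g (1 - t)| * exp (c * ((1 - t) ^ lam - 1)) := by
        rw [abs_mul, abs_mul, abs_of_pos (rpow_pos_of_pos hlc α), abs_of_pos (exp_pos _)]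
    _ ≤ (lam * c) ^ α * (K * t ^ α) * exp (-(1 / lam) * u) := by
        gcongr
        exact hK t ⟨ht0, ht1⟩
    _ = K * (u ^ α * exp (-(1 / lam) * u)) := by rw [← hut]; ring

lemma aestronglyMeasurable_laplaceRescaled (hg : ContinuousOn g (Icc ε 1)) (hlam : 0 < lam)
    {c : ℝ} (hc : 0 < c) : AEStronglyMeasurable (laplaceRescaled g ε α lam c) := by
  have hlc : 0 < lam * c := mul_pos hlam hc
  have hσ : Continuous fun u => 1 - u / (lam * c) := by fun_prop
  have hmaps : MapsTo (fun u => 1 - u / (lam * c)) (Ioc 0 ((1 - ε) * (lam * c))) (Icc ε 1) :=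
    fun u hu => ⟨by linarith [(div_le_iff₀ hlc).2 hu.2], by linarith [div_pos hu.1 hlc]⟩
  refine (aestronglyMeasurable_indicator_iff measurableSet_Ioc).2
    (ContinuousOn.aestronglyMeasurable ?_ measurableSet_Ioc)
  exact (continuousOn_const.mul (hg.comp hσ.continuousOn hmaps)).mul
    (continuous_exp.comp (continuous_const.mul
      (((continuous_rpow_const hlam.le).comp hσ).sub continuous_const))).continuousOn

lemma tendsto_laplaceRescaled (hasymp : Tendsto (fun t => g (1 - t) / t ^ α) (𝓝[>] 0) (𝓝 A))
    (hε1 : ε < 1) (hlam : 0 < lam) {u : ℝ} (hu : 0 < u) :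
    Tendsto (fun c => laplaceRescaled g ε α lam c u) atTop (𝓝 (A * u ^ α * exp (-u))) := by
  have hscale : Tendsto (fun c => u / (lam * c)) atTop (𝓝[>] 0) :=
    tendsto_nhdsWithin_iff.2 ⟨tendsto_const_nhds.div_atTop (tendsto_id.const_mul_atTop hlam),
      by filter_upwards [eventually_gt_atTop 0] with c hc using div_pos hu (mul_pos hlam hc)⟩
  have hpow : Tendsto (fun c => (lam * c) ^ α * g (1 - u / (lam * c))) atTop (𝓝 (A * u ^ α)) := by
    refine ((hasymp.comp hscale).mul_const (u ^ α)).congr' ?_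
    filter_upwards [eventually_gt_atTop 0] with c hc
    have hlc := mul_pos hlam hc
    simp only [Function.comp_apply, div_rpow hu.le hlc.le]
    field_simp [(rpow_pos_of_pos hu α).ne', (rpow_pos_of_pos hlc α).ne']
  have hexp : Tendsto (fun c => exp (c * ((1 - u / (lam * c)) ^ lam - 1))) atTop
      (𝓝 (exp (-u))) := by
    have hlim := tendsto_mul_one_sub_div_rpow_sub_one lam (u / lam)
    rw [div_mul_cancel₀ u hlam.ne'] at hlim
    simpa only [div_mul_eq_div_div, Function.comp_def] using (continuous_exp.tendsto _).comp hlim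
  refine (hpow.mul hexp).congr' ?_
  filter_upwards [eventually_ge_atTop (u / ((1 - ε) * lam))] with c hc
  have hu' : u ≤ (1 - ε) * (lam * c) := by
    rw [div_le_iff₀ (mul_pos (by linarith) hlam)] at hc
    linarith
  rw [laplaceRescaled, indicator_of_mem (show u ∈ Ioc (0 : ℝ) ((1 - ε) * (lam * c)) from ⟨hu, hu'⟩)]

theorem tendsto_laplace (hg : ContinuousOn g (Icc ε 1))
    (hasymp : Tendsto (fun t => g (1 - t) / t ^ α) (𝓝[>] 0) (𝓝 A))
    (hα : -1 < α) (hlam : 1 ≤ lam) (hε0 : 0 ≤ ε) (hε1 : ε < 1) :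
    Tendsto (fun c => (lam * c) ^ (1 + α) * exp (-c) * ∫ s in ε..1, g s * exp (c * s ^ lam))
      atTop (𝓝 (A * Gamma (α + 1))) := by
  have hlam0 : 0 < lam := by linarith
  obtain ⟨K, hK0, hK⟩ := exists_abs_le_mul_rpow hg hasymp
  have hGamma : ∫ u in Ioi 0, A * u ^ α * exp (-u) = A * Gamma (α + 1) := by
    rw [Gamma_eq_integral (by linarith), ← integral_const_mul]
    refine setIntegral_congr_fun measurableSet_Ioi fun u _ => ?_
    rw [add_sub_cancel_right]
    ring
  have hbound : IntegrableOn (fun u => K * (u ^ α * exp (-(1 / lam) * u))) (Ioi 0) := by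
    have h := integrableOn_rpow_mul_exp_neg_mul_rpow hα one_pos (one_div_pos.2 hlam0)
    simp only [rpow_one] at h
    exact h.const_mul K
  rw [← hGamma]
  refine (tendsto_integral_filter_of_dominated_convergence (F := laplaceRescaled g ε α lam) _ ?_ ?_ hbound ?_).congr' ?_
  · filter_upwards [eventually_gt_atTop 0] with c hc
    exact (aestronglyMeasurable_laplaceRescaled hg hlam0 hc).restrict
  · filter_upwards [eventually_gt_atTop 0] with c hc
    filter_upwards [self_mem_ae_restrict measurableSet_Ioi] with u hu
    exact abs_laplaceRescaled_le hK0 hK hε0 hlam hc hu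
  · filter_upwards [self_mem_ae_restrict measurableSet_Ioi] with u hu
    exact tendsto_laplaceRescaled hasymp hε1 hlam0 hu
  · filter_upwards [eventually_gt_atTop 0] with c hc
    exact (mul_exp_integral_eq_integral_laplaceRescaled hε1.le hlam0 hc).symm

end Laplace

lemma tendsto_mul_one_sub_rpow_div_rpow {f : ℝ → ℝ} {A α : ℝ} (p : ℝ)
    (hf : Tendsto (fun t => (f (1 - t) - A * t ^ α) / t ^ α) (𝓝[>] 0) (𝓝 0)) :
    Tendsto (fun t => f (1 - t) * (1 - t) ^ p / t ^ α) (𝓝[>] 0) (𝓝 A) := by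
  have hquot : Tendsto (fun t => f (1 - t) / t ^ α) (𝓝[>] 0) (𝓝 A) := by
    have hsum := hf.add_const A
    rw [zero_add] at hsum
    refine hsum.congr' ?_
    filter_upwards [self_mem_nhdsWithin] with t ht
    field_simp [(rpow_pos_of_pos ht α).ne']
    ring
  have hfactor : Tendsto (fun t : ℝ => (1 - t) ^ p) (𝓝[>] 0) (𝓝 1) := by
    have hcont : ContinuousAt (fun t : ℝ => (1 - t) ^ p) 0 :=
      (continuousAt_const.sub continuousAt_id).rpow_const (Or.inl (by norm_num))
    simpa using hcont.tendsto.mono_left nhdsWithin_le_nhds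
  simpa only [mul_one, div_mul_eq_mul_div] using hquot.mul hfactor

lemma tendsto_inv_mul_rpow_nhdsGT_zero {μ lam : ℝ} (hμ : 0 < μ) (hlam : 0 < lam) :
    Tendsto (fun h : ℝ => (μ * h ^ lam)⁻¹) (𝓝[>] 0) atTop := by
  refine tendsto_inv_nhdsGT_zero.comp (tendsto_nhdsWithin_iff.2 ⟨?_, ?_⟩)
  · have hcont := ((continuous_rpow_const hlam.le).tendsto 0).const_mul μ
    rw [zero_rpow hlam.ne', mul_zero] at hcont
    exact hcont.mono_left nhdsWithin_le_nhds
  · filter_upwards [self_mem_nhdsWithin] with h hh using mul_pos hμ (rpow_pos_of_pos hh lam)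

theorem statement8_general
    (φw : ℝ → ℝ) (hφw_cont : ContinuousOn φw (Set.Icc (-1) 1))
    (A α : ℝ) (hA : A ≠ 0) (hα : 0 ≤ α)
    (hφw_asymp : Tendsto (fun t : ℝ => (φw (1 - t) - A * t ^ α) / t ^ α)
      (nhdsWithin 0 (Set.Ioi 0)) (nhds 0))
    (lam μ lam₀ : ℝ) (hlam : 1 < lam) (hμ : 0 < μ)
    (ε : ℝ) (hε0 : 0 < ε) (hε1 : ε < 1) :
    Tendsto (fun h : ℝ =>
        (∫ s in ε..1, φw s * s ^ (-lam₀) * Real.exp (s ^ lam / (μ * h ^ lam)))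
          / (A * Real.Gamma (α + 1) * ((μ / lam) * h ^ lam) ^ (1 + α)
              * Real.exp (1 / (μ * h ^ lam))))
      (nhdsWithin 0 (Set.Ioi 0)) (nhds 1) := by
  set g : ℝ → ℝ := fun s => φw s * s ^ (-lam₀)
  have hg : ContinuousOn g (Icc ε 1) :=
    (hφw_cont.mono (Icc_subset_Icc (by linarith) le_rfl)).mul
      (continuousOn_id.rpow_const fun s hs => Or.inl (hε0.trans_le hs.1).ne')
  have hasymp : Tendsto (fun t => g (1 - t) / t ^ α) (𝓝[>] 0) (𝓝 A) :=
    tendsto_mul_one_sub_rpow_div_rpow (-lam₀) hφw_asymp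
  have hΓ : A * Gamma (α + 1) ≠ 0 := mul_ne_zero hA (Gamma_pos_of_pos (by linarith)).ne'
  have hlim := ((tendsto_laplace hg hasymp (by linarith) hlam.le hε0.le hε1).comp
    (tendsto_inv_mul_rpow_nhdsGT_zero (lam := lam) hμ (by linarith))).div_const (A * Gamma (α + 1))
  rw [div_self hΓ] at hlim
  refine hlim.congr' ?_
  filter_upwards [self_mem_nhdsWithin] with h hh
  have hP : 0 < μ * h ^ lam := mul_pos hμ (rpow_pos_of_pos hh lam)
  have hscale : (μ / lam) * h ^ lam = (lam * (μ * h ^ lam)⁻¹)⁻¹ := by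
    field_simp
  simp only [Function.comp_apply, hscale, inv_rpow (by positivity : 0 ≤ lam * (μ * h ^ lam)⁻¹),
    div_eq_inv_mul _ (μ * h ^ lam), exp_neg]
  field_simp
  rfl

/-- Laplace-type asymptotics: if `φ_w` is continuous on `[-1,1]` with `|φ_w| ≤ 1` and
`φ_w(1-t) = A tᵅ + o(tᵅ)` as `t ↓ 0` (`A ≠ 0`, `α ≥ 0`), then for any fixed `0 < ε < 1`,
as `h ↓ 0`,
`∫_ε^1 φ_w(s) s^{-λ₀} exp(s^λ/(μ h^λ)) ds ∼ A Γ(α+1) ((μ/λ) h^λ)^{1+α} e^{1/(μ h^λ)}`. -/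
theorem statement8
    (φw : ℝ → ℝ) (hφw_cont : ContinuousOn φw (Set.Icc (-1) 1))
    (hφw_bd : ∀ t ∈ Set.Icc (-1:ℝ) 1, |φw t| ≤ 1)
    (A α : ℝ) (hA : A ≠ 0) (hα : 0 ≤ α)
    (hφw_asymp : Tendsto (fun t : ℝ => (φw (1 - t) - A * t ^ α) / t ^ α)
      (nhdsWithin 0 (Set.Ioi 0)) (nhds 0))
    (lam μ lam₀ : ℝ) (hlam : 1 < lam) (hμ : 0 < μ)
    (ε : ℝ) (hε0 : 0 < ε) (hε1 : ε < 1) :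
    Tendsto (fun h : ℝ =>
        (∫ s in ε..1, φw s * s ^ (-lam₀) * Real.exp (s ^ lam / (μ * h ^ lam)))
          / (A * Real.Gamma (α + 1) * ((μ / lam) * h ^ lam) ^ (1 + α)
              * Real.exp (1 / (μ * h ^ lam))))
      (nhdsWithin 0 (Set.Ioi 0)) (nhds 1) :=
  statement8_general φw hφw_cont A α hA hα hφw_asymp lam μ lam₀ hlam hμ ε hε0 hε1
end

section
/- Let $Y$ be a real random variable with a density, $h_n \to 0$ a positive sequence, and $x$ a fixed real number. Then $(Y-x)/h_n \bmod 2\pi$ converges in distribution to the uniform distribution on $[0,2\pi]$ as $n \to \infty$. -/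
/-!
If `G` is bounded and `T`-periodic with mean `m`, then `G - m` has a bounded primitive, so
`∫ y in a..b, (G (y / h) - m) = O(h)` uniformly in `a, b`. Cutting an interval containing the
support of a continuous compactly supported `φ` into pieces on which `φ` is almost constant gives
`∫ (G (y / h) - m) φ y → 0`, and since the functionals `f ↦ ∫ (G (y / h) - m) f y` are uniformly
bounded on `L¹`, the same holds for every integrable `f`. For `G = g ∘ mod2pi` and `f` the density
of `Y - x` this is the theorem, the mean of `g ∘ mod2pi` over a period being `∫ g ∂uniformTwoPi`.
-/

set_option autoImplicit false
open MeasureTheory ProbabilityTheory Real Filter Topology BoundedContinuousFunction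

/-- `mod2pi w` is the representative in `[0, 2π)` of the residue of `w` modulo `2π`. -/
noncomputable def mod2pi (w : ℝ) : ℝ := (2 * π) * Int.fract (w / (2 * π))

/-- The uniform distribution on `[0, 2π]`. -/
noncomputable def uniformTwoPi : Measure ℝ :=
  (ENNReal.ofReal (2 * π))⁻¹ • (volume.restrict (Set.Icc 0 (2 * π)))

lemma Measurable.intervalIntegrable_of_abs_le {f : ℝ → ℝ} {C : ℝ} (hf : Measurable f)
    (hC : ∀ y, |f y| ≤ C) (a b : ℝ) : IntervalIntegrable f volume a b :=
  ⟨Measure.integrableOn_of_bounded measure_Ioc_lt_top.ne hf.aestronglyMeasurable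
      (ae_of_all _ fun y => hC y),
    Measure.integrableOn_of_bounded measure_Ioc_lt_top.ne hf.aestronglyMeasurable
      (ae_of_all _ fun y => hC y)⟩

lemma abs_le_of_additive_of_local_bound {D : ℝ → ℝ → ℝ} {δ α β : ℝ}
    (hadd : ∀ s t u, D s u = D s t + D t u)
    (hloc : ∀ s t, s ≤ t → t ≤ s + δ → |D s t| ≤ α + β * (t - s)) (n : ℕ)
    {s t : ℝ} (hst : s ≤ t) (hts : t ≤ s + n * δ) : |D s t| ≤ n * α + β * (t - s) := by
  induction n generalizing t with
  | zero =>
    have hD : D s s = 0 := by linarith [hadd s s s]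
    simp [le_antisymm hts (by simpa using hst), hD]
  | succ n ih =>
    push_cast at hts
    have hδ : 0 ≤ δ := by nlinarith
    set r := max s (t - δ)
    have hr : |D s r| ≤ n * α + β * (r - s) :=
      ih (le_max_left _ _)
        (max_le (le_add_of_nonneg_right (mul_nonneg n.cast_nonneg hδ)) (by linarith))
    have hrt : |D r t| ≤ α + β * (t - r) :=
      hloc r t (max_le hst (by linarith)) (by linarith [le_max_right s (t - δ)])
    calc |D s t| = |D s r + D r t| := by rw [← hadd]
      _ ≤ |D s r| + |D r t| := abs_add_le _ _
      _ ≤ (n + 1 : ℕ) * α + β * (t - s) := by push_cast; linarith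

lemma tendsto_zero_of_forall_abs_le_mul_abs_add {u : ℝ → ℝ}
    (hu : ∀ ε > 0, ∃ c, ∀ h ≠ 0, |u h| ≤ c * |h| + ε) : Tendsto u (𝓝[≠] 0) (𝓝 0) := by
  rw [Metric.tendsto_nhds]
  intro ε hε
  obtain ⟨c, hc⟩ := hu (ε / 2) (half_pos hε)
  have hsmall : ∀ᶠ h in 𝓝[≠] (0 : ℝ), c * |h| < ε / 2 := by
    have : Tendsto (fun h : ℝ => c * |h|) (𝓝[≠] 0) (𝓝 0) := by
      simpa using ((continuous_abs.tendsto 0).const_mul c).mono_left nhdsWithin_le_nhds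
    exact this.eventually (gt_mem_nhds (half_pos hε))
  filter_upwards [hsmall, self_mem_nhdsWithin] with h hh hne
  rw [Real.dist_eq, sub_zero]
  linarith [hc h hne]

lemma tendsto_integral_mul_of_forall_approx {α ι : Type*} [MeasurableSpace α] {μ : Measure α}
    {l : Filter ι} {F : ι → α → ℝ} {C : ℝ} (hFm : ∀ i, AEStronglyMeasurable (F i) μ)
    (hFC : ∀ i x, |F i x| ≤ C) {f : α → ℝ} (hf : Integrable f μ)
    (happrox : ∀ ε > 0, ∃ ψ, Integrable ψ μ ∧ ∫ x, ‖f x - ψ x‖ ∂μ ≤ ε ∧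
      Tendsto (fun i => ∫ x, F i x * ψ x ∂μ) l (𝓝 0)) :
    Tendsto (fun i => ∫ x, F i x * f x ∂μ) l (𝓝 0) := by
  rw [Metric.tendsto_nhds]
  intro ε hε
  have hC : 0 < |C| + 1 := by positivity
  obtain ⟨ψ, hψ, hfψ, hψlim⟩ := happrox (ε / 2 / (|C| + 1)) (by positivity)
  filter_upwards [(Metric.tendsto_nhds.mp hψlim) (ε / 2) (half_pos hε)] with i hi
  have hFi (g : α → ℝ) (hg : Integrable g μ) : Integrable (fun x => F i x * g x) μ :=
    hg.bdd_mul (hFm i) (ae_of_all _ fun x => hFC i x)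
  have hdiff : |∫ x, F i x * f x ∂μ - ∫ x, F i x * ψ x ∂μ| ≤ |C| * (ε / 2 / (|C| + 1)) := by
    rw [← integral_sub (hFi f hf) (hFi ψ hψ), ← Real.norm_eq_abs]
    calc ‖∫ x, (F i x * f x - F i x * ψ x) ∂μ‖ ≤ ∫ x, |C| * ‖f x - ψ x‖ ∂μ := by
          refine norm_integral_le_of_norm_le (((hf.sub hψ).norm).const_mul |C|)
            (ae_of_all _ fun x => ?_)
          rw [← mul_sub, norm_mul, Real.norm_eq_abs]
          exact mul_le_mul_of_nonneg_right ((hFC i x).trans (le_abs_self C)) (norm_nonneg _)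
      _ ≤ |C| * (ε / 2 / (|C| + 1)) := by
          rw [integral_const_mul]
          exact mul_le_mul_of_nonneg_left hfψ (abs_nonneg C)
  have hCε : |C| * (ε / 2 / (|C| + 1)) < ε / 2 := by
    rw [mul_div_assoc', div_lt_iff₀ hC]
    nlinarith
  rw [Real.dist_eq, sub_zero] at hi ⊢
  linarith [abs_sub_abs_le_abs_sub (∫ x, F i x * f x ∂μ) (∫ x, F i x * ψ x ∂μ)]

section BoundedPrimitive

variable {G : ℝ → ℝ} {C K : ℝ}

lemma abs_intervalIntegral_comp_div_mul_le (hGm : Measurable G) (hG : ∀ y, |G y| ≤ C)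
    (hK : ∀ a b, |∫ y in a..b, G y| ≤ K) {φ : ℝ → ℝ} (hφ : Continuous φ) {a b c ε h : ℝ}
    (hh : h ≠ 0) (hφc : ∀ y ∈ Set.uIoc a b, |φ y - c| ≤ ε) :
    |∫ y in a..b, G (y / h) * φ y| ≤ |c| * (K * |h|) + C * ε * |b - a| := by
  have hGh : IntervalIntegrable (fun y => G (y / h)) volume a b :=
    (hGm.comp (measurable_id.div_const h)).intervalIntegrable_of_abs_le (fun y => hG _) a b
  have hsplit : ∫ y in a..b, G (y / h) * φ y
      = c * (∫ y in a..b, G (y / h)) + ∫ y in a..b, G (y / h) * (φ y - c) := by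
    rw [← intervalIntegral.integral_const_mul, ← intervalIntegral.integral_add (hGh.const_mul c)
      (hGh.mul_continuousOn (g := fun y => φ y - c) (by fun_prop))]
    congr 1 with y
    ring
  have hmain : |∫ y in a..b, G (y / h)| ≤ K * |h| := by
    rw [intervalIntegral.integral_comp_div G hh, smul_eq_mul, abs_mul, mul_comm]
    exact mul_le_mul_of_nonneg_right (hK _ _) (abs_nonneg h)
  have hrest : |∫ y in a..b, G (y / h) * (φ y - c)| ≤ C * ε * |b - a| := by
    rw [← Real.norm_eq_abs]
    refine intervalIntegral.norm_integral_le_of_norm_le_const fun y hy => ?_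
    rw [norm_mul, Real.norm_eq_abs, Real.norm_eq_abs]
    exact mul_le_mul (hG _) (hφc y hy) (abs_nonneg _) ((abs_nonneg _).trans (hG 0))
  calc |∫ y in a..b, G (y / h) * φ y|
      ≤ |c| * |∫ y in a..b, G (y / h)| + |∫ y in a..b, G (y / h) * (φ y - c)| := by
        rw [hsplit, ← abs_mul]
        exact abs_add_le _ _
    _ ≤ |c| * (K * |h|) + C * ε * |b - a| := by gcongr

lemma tendsto_integral_comp_div_mul_of_hasCompactSupport (hGm : Measurable G)
    (hG : ∀ y, |G y| ≤ C) (hK : ∀ a b, |∫ y in a..b, G y| ≤ K) {φ : ℝ → ℝ} (hφ : Continuous φ)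
    (hφs : HasCompactSupport φ) :
    Tendsto (fun h => ∫ y, G (y / h) * φ y) (𝓝[≠] 0) (𝓝 0) := by
  have hC : 0 ≤ C := (abs_nonneg _).trans (hG 0)
  obtain ⟨R, hR, hsupp⟩ := hφs.isCompact.isBounded.subset_closedBall_lt 0 0
  rw [Real.closedBall_eq_Icc, zero_sub, zero_add] at hsupp
  have hIcc (h : ℝ) : ∫ y, G (y / h) * φ y = ∫ y in -R..R, G (y / h) * φ y := by
    rw [intervalIntegral.integral_of_le (by linarith), ← integral_Icc_eq_integral_Ioc,
      setIntegral_eq_integral_of_forall_compl_eq_zero fun y hy => ?_]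
    rw [image_eq_zero_of_notMem_tsupport fun hy' => hy (hsupp hy'), mul_zero]
  obtain ⟨M, hM⟩ := hφ.bounded_above_of_compact_support hφs
  apply tendsto_zero_of_forall_abs_le_mul_abs_add
  intro ε hε
  set ε₁ := ε / (C * (2 * R) + 1)
  have hε₁ : C * ε₁ * (2 * R) ≤ ε := by
    have hd : 0 < C * (2 * R) + 1 := by positivity
    calc C * ε₁ * (2 * R) = ε * (C * (2 * R) / (C * (2 * R) + 1)) := by ring
      _ ≤ ε := mul_le_of_le_one_right hε.le ((div_le_one hd).2 (by linarith))
  obtain ⟨δ, hδ, hδφ⟩ := Metric.uniformContinuous_iff.mp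
    (hφs.uniformContinuous_of_continuous hφ) ε₁ (by positivity)
  obtain ⟨n, hn⟩ := exists_nat_ge (2 * R / (δ / 2))
  refine ⟨n * (M * K), fun h hh => ?_⟩
  have hint (s t : ℝ) : IntervalIntegrable (fun y => G (y / h) * φ y) volume s t :=
    ((hGm.comp (measurable_id.div_const h)).intervalIntegrable_of_abs_le (fun y => hG _) s
      t).mul_continuousOn hφ.continuousOn
  have hpiece (s t : ℝ) (hst : s ≤ t) (hts : t ≤ s + δ / 2) :
      |∫ y in s..t, G (y / h) * φ y| ≤ M * K * |h| + C * ε₁ * (t - s) := by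
    have hclose : ∀ y ∈ Set.uIoc s t, |φ y - φ s| ≤ ε₁ := fun y hy => by
      rw [Set.uIoc_of_le hst] at hy
      have hys : dist y s < δ := by
        rw [Real.dist_eq, abs_of_pos (by linarith [hy.1])]
        linarith [hy.2]
      exact (hδφ hys).le
    calc |∫ y in s..t, G (y / h) * φ y| ≤ |φ s| * (K * |h|) + C * ε₁ * |t - s| :=
          abs_intervalIntegral_comp_div_mul_le hGm hG hK hφ hh hclose
      _ ≤ M * K * |h| + C * ε₁ * (t - s) := by
          rw [abs_of_nonneg (sub_nonneg.2 hst), ← mul_assoc]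
          have hK0 : 0 ≤ K := (abs_nonneg _).trans (hK 0 0)
          gcongr
          exact hM s
  have hbound := abs_le_of_additive_of_local_bound
    (fun s t u => (intervalIntegral.integral_add_adjacent_intervals (hint s t) (hint t u)).symm)
    hpiece n (s := -R) (t := R) (by linarith) (by
      rw [div_le_iff₀ (by positivity)] at hn
      linarith)
  rw [hIcc]
  linarith

theorem tendsto_integral_comp_div_mul_of_abs_intervalIntegral_le (hGm : Measurable G)
    (hG : ∀ y, |G y| ≤ C) (hK : ∀ a b, |∫ y in a..b, G y| ≤ K) {f : ℝ → ℝ} (hf : Integrable f) :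
    Tendsto (fun h => ∫ y, G (y / h) * f y) (𝓝[≠] 0) (𝓝 0) := by
  refine tendsto_integral_mul_of_forall_approx (F := fun h y => G (y / h))
    (fun h => (hGm.comp (measurable_id.div_const h)).aestronglyMeasurable) (fun h y => hG _) hf
    fun ε hε => ?_
  obtain ⟨φ, hφs, hfφ, hφ, hφi⟩ := hf.exists_hasCompactSupport_integral_sub_le hε
  exact ⟨φ, hφi, hfφ, tendsto_integral_comp_div_mul_of_hasCompactSupport hGm hG hK hφ hφs⟩

end BoundedPrimitive

section Periodic

variable {G : ℝ → ℝ} {T C : ℝ}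

lemma Function.Periodic.abs_intervalIntegral_le_of_integral_eq_zero (hper : G.Periodic T)
    (hT : 0 < T) (hGm : Measurable G) (hG : ∀ y, |G y| ≤ C) (h0 : ∫ y in 0..T, G y = 0)
    (a b : ℝ) : |∫ y in a..b, G y| ≤ 2 * C * T := by
  have hint := hGm.intervalIntegrable_of_abs_le hG
  have hprim_per : Function.Periodic (fun t => ∫ y in 0..t, G y) T := fun t => by
    simp only [hper.intervalIntegral_add_eq_add 0 t hint, zero_add, h0, add_zero]
  have hprim (t : ℝ) : |∫ y in 0..t, G y| ≤ C * T := by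
    obtain ⟨r, hr, hrt⟩ := hprim_per.exists_mem_Ico₀ hT t
    rw [show (∫ y in 0..t, G y) = ∫ y in 0..r, G y from hrt, ← Real.norm_eq_abs]
    calc ‖∫ y in 0..r, G y‖ ≤ C * |r - 0| :=
          intervalIntegral.norm_integral_le_of_norm_le_const fun y _ => hG y
      _ ≤ C * T := by
          rw [sub_zero, abs_of_nonneg hr.1]
          exact mul_le_mul_of_nonneg_left hr.2.le ((abs_nonneg _).trans (hG 0))
  rw [← intervalIntegral.integral_interval_sub_left (hint 0 b) (hint 0 a)]
  linarith [abs_sub (∫ y in 0..b, G y) (∫ y in 0..a, G y), hprim a, hprim b]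

theorem Function.Periodic.tendsto_integral_comp_div_mul (hper : G.Periodic T) (hT : 0 < T)
    (hGm : Measurable G) (hG : ∀ y, |G y| ≤ C) {f : ℝ → ℝ} (hf : Integrable f) :
    Tendsto (fun h => ∫ y, G (y / h) * f y) (𝓝[≠] 0)
      (𝓝 ((∫ y in 0..T, G y) / T * ∫ y, f y)) := by
  set m := (∫ y in 0..T, G y) / T
  have hint := hGm.intervalIntegrable_of_abs_le hG
  have hG₀ : ∀ y, |G y - m| ≤ C + |m| := fun y => (abs_sub _ _).trans (by linarith [hG y])
  have h₀ : ∫ y in 0..T, (G y - m) = 0 := by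
    rw [intervalIntegral.integral_sub (hint 0 T) intervalIntegrable_const,
      intervalIntegral.integral_const, smul_eq_mul, sub_zero, mul_div_cancel₀ _ hT.ne', sub_self]
  have hper₀ : Function.Periodic (fun y => G y - m) T := fun y => congrArg (· - m) (hper y)
  have hlim := tendsto_integral_comp_div_mul_of_abs_intervalIntegral_le
    (G := fun y => G y - m) (hGm.sub measurable_const)
    hG₀ (hper₀.abs_intervalIntegral_le_of_integral_eq_zero hT (hGm.sub measurable_const) hG₀ h₀) hf
  refine (zero_add (m * ∫ y, f y) ▸ hlim.add_const (m * ∫ y, f y)).congr fun h => ?_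
  have hGh : Integrable (fun y => (G (y / h) - m) * f y) :=
    hf.bdd_mul ((hGm.comp (measurable_id.div_const h)).sub measurable_const).aestronglyMeasurable
      (ae_of_all _ fun y => hG₀ _)
  rw [← integral_const_mul, ← integral_add hGh (hf.const_mul m)]
  congr 1 with y
  ring

end Periodic

lemma mod2pi_eq_self {w : ℝ} (h0 : 0 ≤ w) (h1 : w < 2 * π) : mod2pi w = w := by
  rw [mod2pi, Int.fract_eq_self.mpr ⟨div_nonneg h0 two_pi_pos.le, (div_lt_one two_pi_pos).mpr h1⟩,
    mul_div_cancel₀ _ two_pi_pos.ne']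

lemma periodic_mod2pi : Function.Periodic mod2pi (2 * π) := fun w => by
  rw [mod2pi, mod2pi, add_div, div_self two_pi_pos.ne', Int.fract_add_one]

lemma measurable_mod2pi : Measurable mod2pi :=
  ((measurable_id.div_const (2 * π)).fract).const_mul (2 * π)

lemma integral_uniformTwoPi (g : ℝ → ℝ) :
    ∫ y, g y ∂uniformTwoPi = (∫ y in 0..2 * π, g (mod2pi y)) / (2 * π) := by
  have hmod : ∀ᵐ y ∂volume.restrict (Set.Ioc 0 (2 * π)), g y = g (mod2pi y) := by
    filter_upwards [ae_restrict_mem measurableSet_Ioc,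
      ae_restrict_of_ae (compl_mem_ae_iff.2 (measure_singleton (2 * π)))] with y hy hne
    rw [mod2pi_eq_self hy.1.le (hy.2.lt_of_ne hne)]
  rw [uniformTwoPi, integral_smul_measure, integral_Icc_eq_integral_Ioc, integral_congr_ae hmod,
    intervalIntegral.integral_of_le two_pi_pos.le, ENNReal.toReal_inv,
    ENNReal.toReal_ofReal two_pi_pos.le, smul_eq_mul, inv_mul_eq_div]

lemma integrable_pdf_toReal {Ω E : Type*} [MeasurableSpace Ω] [MeasurableSpace E] (X : Ω → E)
    (P : Measure Ω) [IsFiniteMeasure P] (μ : Measure E) [HasPDF X P μ] :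
    Integrable (fun y => (pdf X P μ y).toReal) μ := by
  have h1 : Integrable (fun y => (pdf X P μ y).toReal • (1 : ℝ)) μ :=
    (pdf.integrable_pdf_smul_iff aestronglyMeasurable_const).mpr (integrable_const 1)
  simpa using h1

lemma integral_pdf_toReal {Ω E : Type*} [MeasurableSpace Ω] [MeasurableSpace E] (X : Ω → E)
    (P : Measure Ω) [IsProbabilityMeasure P] (μ : Measure E) [HasPDF X P μ] :
    ∫ y, (pdf X P μ y).toReal ∂μ = 1 := by
  have h1 : ∫ y, (pdf X P μ y).toReal • (1 : ℝ) ∂μ = ∫ _, (1 : ℝ) ∂P :=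
    pdf.integral_pdf_smul aestronglyMeasurable_const
  simpa using h1

theorem statement15_general
    {Ω : Type*} [MeasurableSpace Ω] (P : Measure Ω) [IsProbabilityMeasure P]
    (Y : Ω → ℝ) (hY_pdf : HasPDF Y P volume)
    (hn : ℕ → ℝ) (hhn_pos : ∀ n, 0 < hn n) (hhn0 : Tendsto hn atTop (nhds 0))
    (x : ℝ) :
    ∀ g : BoundedContinuousFunction ℝ ℝ,
      Tendsto (fun n : ℕ => ∫ ω, g (mod2pi ((Y ω - x) / hn n)) ∂P)
        atTop (nhds (∫ y, g y ∂uniformTwoPi)) := by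
  intro g
  set f : ℝ → ℝ := fun y => (pdf Y P volume (y + x)).toReal
  have hG : Measurable fun w => g (mod2pi w) := g.continuous.measurable.comp measurable_mod2pi
  have hrepr (h : ℝ) : ∫ ω, g (mod2pi ((Y ω - x) / h)) ∂P = ∫ y, g (mod2pi (y / h)) * f y := by
    calc ∫ ω, g (mod2pi ((Y ω - x) / h)) ∂P
        = ∫ y, (pdf Y P volume y).toReal • g (mod2pi ((y - x) / h)) :=
          (pdf.integral_pdf_smul
            (hG.comp ((measurable_id.sub_const x).div_const h)).aestronglyMeasurable).symm
      _ = ∫ y, (pdf Y P volume (y + x)).toReal • g (mod2pi ((y + x - x) / h)) :=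
          (integral_add_right_eq_self
            (fun y => (pdf Y P volume y).toReal • g (mod2pi ((y - x) / h))) x).symm
      _ = ∫ y, g (mod2pi (y / h)) * f y := by simp [f, mul_comm]
  have hlim := Function.Periodic.tendsto_integral_comp_div_mul (G := fun w => g (mod2pi w))
    (periodic_mod2pi.comp g) two_pi_pos hG
    (fun y => g.norm_coe_le_norm _) ((integrable_pdf_toReal Y P volume).comp_add_right x)
  rw [integral_add_right_eq_self (fun y => (pdf Y P volume y).toReal),
    integral_pdf_toReal Y P volume, mul_one, ← integral_uniformTwoPi] at hlim
  simp_rw [hrepr]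
  exact hlim.comp (tendsto_nhdsWithin_iff.2 ⟨hhn0, .of_forall fun n => (hhn_pos n).ne'⟩)

/-- If `Y` has a density and `hₙ → 0` (`hₙ > 0`), then `(Y - x)/hₙ mod 2π` converges in
distribution to the uniform distribution on `[0, 2π]`. -/
theorem statement15
    {Ω : Type*} [MeasurableSpace Ω] (P : Measure Ω) [IsProbabilityMeasure P]
    (Y : Ω → ℝ) (hY_meas : Measurable Y) (hY_pdf : HasPDF Y P volume)
    (hn : ℕ → ℝ) (hhn_pos : ∀ n, 0 < hn n) (hhn0 : Tendsto hn atTop (nhds 0))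
    (x : ℝ) :
    ∀ g : BoundedContinuousFunction ℝ ℝ,
      Tendsto (fun n : ℕ => ∫ ω, g (mod2pi ((Y ω - x) / hn n)) ∂P)
        atTop (nhds (∫ y, g y ∂uniformTwoPi)) :=
  statement15_general P Y hY_pdf hn hhn_pos hhn0 x
end
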